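/- (Model Laplace-type estimate, equation (eq:estLogint1) in the proof of Proposition B.1.) Let β > −1, δ > 0 and s₀ ∈ ℝ. Then there exist η > 0, C > 0 and T > 0 such that for all t ≥ T and all s ≥ s₀: | ∫₀^δ x^β · log(1 + e^{−s − t·x}) dx − t^{−(β+1)}·F_β(s) | ≤ C·e^{−η·t}. -/

import Mathlib

/-!
Substituting `x ↦ t x` turns the integral over all of `(0, ∞)` into exactly `t^{-(β+1)} F_β(s)`,
so the error is the tail integral over `[δ, ∞)`. There `log (1 + e^u) ≤ e^u` and
`(t - 1)(x - δ) ≥ 0` give `log (1 + e^{-s-tx}) ≤ e^{δ - s₀ - δt} e^{-x}`, and integrating against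
`x^β` yields the bound with `η = δ`, `C = e^{δ - s₀} Γ(β + 1)` and `T = 1`.
-/

open MeasureTheory

/-- `F_β(s) := ∫₀^∞ x^β log(1 + e^{−s−x}) dx`. -/
noncomputable def Fbeta (β s : ℝ) : ℝ :=
  ∫ x in Set.Ioi (0 : ℝ), x ^ β * Real.log (1 + Real.exp (-s - x))

open Real Set

lemma log_one_add_exp_le_exp (u : ℝ) : log (1 + exp u) ≤ exp u := by
  linarith [log_le_sub_one_of_pos (show 0 < 1 + exp u by positivity)]

lemma integrableOn_rpow_mul_exp_neg {β : ℝ} (hβ : -1 < β) :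
    IntegrableOn (fun x : ℝ => x ^ β * exp (-x)) (Ioi 0) :=
  (GammaIntegral_convergent (by linarith : 0 < β + 1)).congr_fun
    (fun x _ => by simp [mul_comm]) measurableSet_Ioi

lemma integral_rpow_mul_exp_neg {β : ℝ} (hβ : -1 < β) :
    ∫ x in Ioi (0 : ℝ), x ^ β * exp (-x) = Gamma (β + 1) := by
  simp [Gamma_eq_integral (by linarith : 0 < β + 1), mul_comm]

lemma integral_Ioi_rpow_mul_comp_mul_left (f : ℝ → ℝ) (β : ℝ) {t : ℝ} (ht : 0 < t) :
    ∫ x in Ioi (0 : ℝ), x ^ β * f (t * x) =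
      t ^ (-(β + 1)) * ∫ x in Ioi (0 : ℝ), x ^ β * f x := by
  have hscale := integral_comp_mul_left_Ioi (fun y => y ^ β * f y) 0 ht
  have hpow : ∫ x in Ioi (0 : ℝ), (t * x) ^ β * f (t * x)
      = t ^ β * ∫ x in Ioi (0 : ℝ), x ^ β * f (t * x) := by
    rw [← integral_const_mul]
    refine setIntegral_congr_fun measurableSet_Ioi fun x hx => ?_
    rw [mul_rpow ht.le (le_of_lt hx), mul_assoc]
  rw [hpow, mul_zero, smul_eq_mul] at hscale
  rw [rpow_neg ht.le, rpow_add ht, rpow_one, mul_inv, mul_assoc, ← hscale, ← mul_assoc,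
    inv_mul_cancel₀ (rpow_pos_of_pos ht β).ne', one_mul]

lemma integral_Ioo_sub_integral_Ioi {f : ℝ → ℝ} {a b : ℝ} (hab : a < b)
    (hf : IntegrableOn f (Ioi a)) :
    (∫ x in Ioo a b, f x) - ∫ x in Ioi a, f x = -∫ x in Ici b, f x := by
  rw [← Ioo_union_Ici_eq_Ioi hab,
    setIntegral_union ((Iio_disjoint_Ici le_rfl).mono_left Ioo_subset_Iio_self) measurableSet_Ici
    (hf.mono_set Ioo_subset_Ioi_self) (hf.mono_set (Ici_subset_Ioi.2 hab))]
  ring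

lemma log_one_add_exp_neg_sub_mul_le {s₀ s t δ x : ℝ} (hs : s₀ ≤ s) (ht : 1 ≤ t) (hx : δ ≤ x) :
    log (1 + exp (-s - t * x)) ≤ exp (δ - s₀ - δ * t) * exp (-x) := by
  rw [← exp_add]
  refine (log_one_add_exp_le_exp _).trans (exp_le_exp.2 ?_)
  nlinarith [mul_nonneg (sub_nonneg.2 ht) (sub_nonneg.2 hx)]

lemma rpow_mul_log_one_add_exp_nonneg (β s t : ℝ) {x : ℝ} (hx : 0 ≤ x) :
    0 ≤ x ^ β * log (1 + exp (-s - t * x)) :=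
  mul_nonneg (rpow_nonneg hx β) (log_nonneg (by linarith [exp_pos (-s - t * x)]))

lemma integrableOn_rpow_mul_log_one_add_exp {β : ℝ} (hβ : -1 < β) (s : ℝ) {t : ℝ}
    (ht : 1 ≤ t) :
    IntegrableOn (fun x : ℝ => x ^ β * log (1 + exp (-s - t * x))) (Ioi 0) := by
  -- the dominating function comes from the pointwise tail bound at `δ = 0`, `s₀ = s`
  refine ((integrableOn_rpow_mul_exp_neg hβ).const_mul (exp (0 - s - 0 * t))).mono' ?_ ?_
  · exact Measurable.aestronglyMeasurable (by fun_prop)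
  filter_upwards [ae_restrict_mem measurableSet_Ioi] with x hx
  rw [norm_of_nonneg (rpow_mul_log_one_add_exp_nonneg β s t (le_of_lt hx)), mul_left_comm]
  exact mul_le_mul_of_nonneg_left (log_one_add_exp_neg_sub_mul_le le_rfl ht (le_of_lt hx))
    (rpow_nonneg (le_of_lt hx) β)

lemma setIntegral_Ici_rpow_mul_log_one_add_exp_le {β δ s₀ s t : ℝ} (hβ : -1 < β) (hδ : 0 < δ)
    (hs : s₀ ≤ s) (ht : 1 ≤ t) :
    ∫ x in Ici δ, x ^ β * log (1 + exp (-s - t * x)) ≤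
      exp (δ - s₀) * Gamma (β + 1) * exp (-δ * t) := by
  have hsub : Ici δ ⊆ Ioi (0 : ℝ) := Ici_subset_Ioi.2 hδ
  have hgamma := integrableOn_rpow_mul_exp_neg hβ
  calc ∫ x in Ici δ, x ^ β * log (1 + exp (-s - t * x))
      ≤ ∫ x in Ici δ, exp (δ - s₀ - δ * t) * (x ^ β * exp (-x)) := by
        refine setIntegral_mono_on
          ((integrableOn_rpow_mul_log_one_add_exp hβ s ht).mono_set hsub)
          ((hgamma.mono_set hsub).const_mul _) measurableSet_Ici fun x hx => ?_
        rw [mul_left_comm]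
        exact mul_le_mul_of_nonneg_left (log_one_add_exp_neg_sub_mul_le hs ht hx)
          (rpow_nonneg (hδ.le.trans hx) β)
    _ ≤ exp (δ - s₀ - δ * t) * ∫ x in Ioi 0, x ^ β * exp (-x) := by
        rw [integral_const_mul]
        refine mul_le_mul_of_nonneg_left (setIntegral_mono_set hgamma ?_ hsub.eventuallyLE)
          (exp_pos _).le
        filter_upwards [ae_restrict_mem measurableSet_Ioi] with x hx
        exact mul_nonneg (rpow_nonneg (le_of_lt hx) β) (exp_pos _).le
    _ = exp (δ - s₀) * Gamma (β + 1) * exp (-δ * t) := by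
        rw [integral_rpow_mul_exp_neg hβ, sub_eq_add_neg (δ - s₀), exp_add]
        ring_nf

/-- Model Laplace-type estimate (equation (eq:estLogint1) in the proof of Proposition B.1). -/
theorem statement7 (β δ s₀ : ℝ) (hβ : -1 < β) (hδ : 0 < δ) :
    ∃ η C T : ℝ, 0 < η ∧ 0 < C ∧ 0 < T ∧
      ∀ t : ℝ, T ≤ t → ∀ s : ℝ, s₀ ≤ s →
        |(∫ x in Set.Ioo (0 : ℝ) δ, x ^ β * Real.log (1 + Real.exp (-s - t * x))) -
            t ^ (-(β + 1)) * Fbeta β s|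
          ≤ C * Real.exp (-η * t) := by
  have hC : 0 < exp (δ - s₀) * Gamma (β + 1) :=
    mul_pos (exp_pos _) (Gamma_pos_of_pos (by linarith))
  refine ⟨δ, _, 1, hδ, hC, one_pos, fun t ht s hs => ?_⟩
  have hscale : ∫ x in Ioi (0 : ℝ), x ^ β * log (1 + exp (-s - t * x)) =
      t ^ (-(β + 1)) * Fbeta β s :=
    integral_Ioi_rpow_mul_comp_mul_left (fun y => log (1 + exp (-s - y))) β (by linarith)
  rw [← hscale, integral_Ioo_sub_integral_Ioi hδ (integrableOn_rpow_mul_log_one_add_exp hβ s ht),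
    abs_neg, abs_of_nonneg (setIntegral_nonneg measurableSet_Ici fun x hx =>
      rpow_mul_log_one_add_exp_nonneg β s t (hδ.le.trans hx))]
  exact setIntegral_Ici_rpow_mul_log_one_add_exp_le hβ hδ hs ht
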